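/- Let τ be the ℚ-algebra automorphism of ℚ[r, t₁, t₂] determined by r ↦ −r, t₁ ↦ t₂, t₂ ↦ t₁. Then the subalgebra of τ-invariant polynomials equals the ℚ-subalgebra of ℚ[r, t₁, t₂] generated by the four elements u₁ := t₁ + t₂, u₂ := t₁² + t₂², u₃ := r(t₁ − t₂), and u₄ := r². -/

import Mathlib

/-!
The generators are τ-invariant. Conversely, an invariant `P` equals `(P + τ P) / 2` and
`P ↦ P + τ P` is linear, so it suffices that `m + τ m` lies in the subalgebra for every monomial
`m = r^a t₁^b t₂^c`. Since `t₁ t₂ = (u₁² - u₂) / 2`, the power sums `t₁^k + t₂^k` and the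
products `r (t₁^k - t₂^k)` satisfy the recurrence `f (k + 2) = u₁ f (k + 1) - t₁ t₂ f k`, and
`m + τ m` is, up to sign, a product of powers of `u₄ = r²` and `t₁ t₂` with one of them.
-/

open MvPolynomial

section SubringClass

variable {R σ : Type*} [CommRing R] [SetLike σ R] [SubringClass σ R] {S : σ}

theorem mem_of_two_step_recurrence {a b : R} (ha : a ∈ S) (hb : b ∈ S) {f : ℕ → R}
    (h0 : f 0 ∈ S) (h1 : f 1 ∈ S) (hf : ∀ n, f (n + 2) = a * f (n + 1) + b * f n) (n : ℕ) :
    f n ∈ S := by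
  induction n using Nat.twoStepInduction with
  | zero => exact h0
  | one => exact h1
  | more n ih₀ ih₁ => rw [hf]; exact add_mem (mul_mem ha ih₁) (mul_mem hb ih₀)

variable {x y z : R} (hsum : x + y ∈ S) (hprod : x * y ∈ S)
include hsum hprod

theorem pow_add_pow_mem (n : ℕ) : x ^ n + y ^ n ∈ S :=
  mem_of_two_step_recurrence hsum (neg_mem hprod) (f := fun n ↦ x ^ n + y ^ n)
    (by simp [add_mem (one_mem S) (one_mem S)]) (by simpa using hsum)
    (fun n ↦ by ring) n

theorem mul_pow_sub_pow_mem (hanti : z * (x - y) ∈ S) (n : ℕ) : z * (x ^ n - y ^ n) ∈ S :=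
  mem_of_two_step_recurrence hsum (neg_mem hprod) (f := fun n ↦ z * (x ^ n - y ^ n))
    (by simp) (by simpa using hanti) (fun n ↦ by ring) n

theorem pow_mul_pow_add_pow_mul_pow_mem (b c : ℕ) : x ^ b * y ^ c + x ^ c * y ^ b ∈ S := by
  wlog hcb : c ≤ b generalizing b c
  · rw [add_comm]; exact this c b (by omega)
  obtain ⟨d, rfl⟩ := Nat.exists_eq_add_of_le hcb
  rw [show x ^ (c + d) * y ^ c + x ^ c * y ^ (c + d) = (x * y) ^ c * (x ^ d + y ^ d) by ring]
  exact mul_mem (pow_mem hprod c) (pow_add_pow_mem hsum hprod d)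

theorem mul_pow_mul_pow_sub_pow_mul_pow_mem (hanti : z * (x - y) ∈ S) (b c : ℕ) :
    z * (x ^ b * y ^ c - x ^ c * y ^ b) ∈ S := by
  wlog hcb : c ≤ b generalizing b c
  · convert neg_mem (this c b (by omega)) using 1; ring
  obtain ⟨d, rfl⟩ := Nat.exists_eq_add_of_le hcb
  rw [show z * (x ^ (c + d) * y ^ c - x ^ c * y ^ (c + d))
      = (x * y) ^ c * (z * (x ^ d - y ^ d)) by ring]
  exact mul_mem (pow_mem hprod c) (mul_pow_sub_pow_mem hsum hprod hanti d)

theorem pow_mul_pow_mul_pow_add_neg_pow_mul_pow_mul_pow_mem (hanti : z * (x - y) ∈ S)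
    (hsq : z ^ 2 ∈ S) (a b c : ℕ) : z ^ a * x ^ b * y ^ c + (-z) ^ a * y ^ b * x ^ c ∈ S := by
  induction a using Nat.twoStepInduction with
  | zero =>
    convert pow_mul_pow_add_pow_mul_pow_mem hsum hprod b c using 1; ring
  | one =>
    convert mul_pow_mul_pow_sub_pow_mul_pow_mem hsum hprod hanti b c using 1; ring
  | more a ih _ =>
    convert mul_mem hsq ih using 1; ring

end SubringClass

theorem MvPolynomial.add_apply_mem_of_forall_monomial {R σ : Type*} [CommSemiring R]
    (f : MvPolynomial σ R →ₗ[R] MvPolynomial σ R) (S : Submodule R (MvPolynomial σ R))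
    (h : ∀ d, monomial d 1 + f (monomial d 1) ∈ S) (p : MvPolynomial σ R) : p + f p ∈ S := by
  induction p using MvPolynomial.induction_on' with
  | monomial d a =>
    rw [← mul_one a, ← smul_eq_mul, ← smul_monomial, map_smul, ← smul_add]
    exact S.smul_mem a (h d)
  | add p q hp hq =>
    rw [map_add, add_add_add_comm]
    exact add_mem hp hq

theorem Subalgebra.mul_mem_of_add_mem_of_sq_add_sq_mem {K A : Type*} [Field K] [NeZero (2 : K)]
    [CommRing A] [Algebra K A] (S : Subalgebra K A) {x y : A} (hsum : x + y ∈ S)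
    (hsq : x ^ 2 + y ^ 2 ∈ S) : x * y ∈ S := by
  have h : (2 : K) • (x * y) = (x + y) ^ 2 - (x ^ 2 + y ^ 2) := by rw [two_smul]; ring
  rw [← inv_smul_smul₀ (two_ne_zero : (2 : K) ≠ 0) (x * y), h]
  exact S.smul_mem (sub_mem (pow_mem hsum 2) hsq) _

namespace Tau

noncomputable abbrev tau : MvPolynomial (Fin 3) ℚ →ₐ[ℚ] MvPolynomial (Fin 3) ℚ :=
  aeval ![-(X 0 : MvPolynomial (Fin 3) ℚ), X 2, X 1]

abbrev generators : Set (MvPolynomial (Fin 3) ℚ) :=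
  {X 1 + X 2, X 1 ^ 2 + X 2 ^ 2, X 0 * (X 1 - X 2), X 0 ^ 2}

theorem monomial_one_eq (d : Fin 3 →₀ ℕ) :
    (monomial d 1 : MvPolynomial (Fin 3) ℚ) = X 0 ^ d 0 * X 1 ^ d 1 * X 2 ^ d 2 := by
  rw [monomial_eq, Finsupp.prod_pow, Fin.prod_univ_three, C_1, one_mul, mul_assoc]

theorem tau_monomial (d : Fin 3 →₀ ℕ) :
    tau (monomial d 1) = (-X 0) ^ d 0 * X 2 ^ d 1 * X 1 ^ d 2 := by
  simp [monomial_one_eq]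

theorem monomial_add_tau_mem (d : Fin 3 →₀ ℕ) :
    monomial d 1 + tau (monomial d 1) ∈ Algebra.adjoin ℚ generators := by
  have mem : ∀ {p}, p ∈ generators → p ∈ Algebra.adjoin ℚ generators := (Algebra.subset_adjoin ·)
  have hsum := mem (p := X 1 + X 2) (by simp)
  have hprod := (Algebra.adjoin ℚ generators).mul_mem_of_add_mem_of_sq_add_sq_mem hsum
    (mem (p := X 1 ^ 2 + X 2 ^ 2) (by simp))
  rw [tau_monomial, monomial_one_eq]
  exact pow_mul_pow_mul_pow_add_neg_pow_mul_pow_mul_pow_mem hsum hprod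
    (mem (by simp)) (mem (by simp)) _ _ _

theorem tau_eqOn_generators : Set.EqOn tau (AlgHom.id ℚ _) generators := by
  rintro p (rfl | rfl | rfl | rfl) <;> simp <;> ring

end Tau

theorem invariants_of_tau (P : MvPolynomial (Fin 3) ℚ) :
    aeval ![-(X 0 : MvPolynomial (Fin 3) ℚ), X 2, X 1] P = P ↔
      P ∈ Algebra.adjoin ℚ
        ({X 1 + X 2, X 1 ^ 2 + X 2 ^ 2, X 0 * (X 1 - X 2), X 0 ^ 2} :
          Set (MvPolynomial (Fin 3) ℚ)) := by
  refine ⟨fun hP ↦ ?_, fun hP ↦ AlgHom.adjoin_le_equalizer _ _ Tau.tau_eqOn_generators hP⟩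
  have hsum := add_apply_mem_of_forall_monomial Tau.tau.toLinearMap
    (Subalgebra.toSubmodule (Algebra.adjoin ℚ Tau.generators)) Tau.monomial_add_tau_mem P
  rw [AlgHom.toLinearMap_apply, hP, ← two_smul ℚ P] at hsum
  simpa using Subalgebra.smul_mem _ hsum (2 : ℚ)⁻¹
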